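/- Let H be a real Hilbert space and J : H → ℝ ∪ {+∞} be a proper, convex, lower semi-continuous, absolutely one-homogeneous functional. Let (u^k) be generated by the proximal power method u⁰ = f with f ∈ N(J)^⊥, ‖f‖ = 1, 0 < J(f) < ∞, v^k = prox_α^J(u^k), u^{k+1} = v^k/‖v^k‖, with a constant parameter α satisfying 0 < α < 1/J(u⁰). Then for every k the iterate satisfies α < 1/J(u^k) ≤ J_*(u^k), hence v^k = prox_α^J(u^k) ≠ 0 and the method is well-defined. -/

import Mathlib

/-!
The iterates keep the invariant `u ⊥ N(J)`, `‖u‖ = 1`, `α J(u) < 1`. Such a `u` has `J(u) > 0`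
(an element of `N(J)` orthogonal to `N(J)` vanishes), and testing `J_*(u)` with `p = u` gives
`1 / J(u) ≤ J_*(u)`. Its prox point `v` is nonzero: `t u` with `t = 1 - α J(u)` beats `0` in the
proximal objective. First-order optimality of `v` in a null direction `n`, along which
`J(v + t n) ≤ J(v)` by subadditivity, gives `⟪v - u, n⟫ = 0`, so `v ⊥ N(J)`; along the ray through
`v`, where `J` is linear, it gives `‖v‖² - ⟪u, v⟫ + α J(v) = 0`, so `α J(v) ≤ ‖v‖ (1 - ‖v‖)` and
`α J(v / ‖v‖) < 1`.
-/

open scoped RealInnerProductSpace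

noncomputable section

variable {H : Type*} [NormedAddCommGroup H] [InnerProductSpace ℝ H] [CompleteSpace H]

/-- `J` is absolutely one-homogeneous: `J (c • u) = |c| * J u` for `c ≠ 0`, and `J 0 = 0`. -/
def AbsOneHom (J : H → EReal) : Prop :=
  J 0 = 0 ∧ ∀ c : ℝ, c ≠ 0 → ∀ u : H, J (c • u) = ((|c| : ℝ) : EReal) * J u

/-- Convexity of an extended-real-valued functional. -/
def ConvexFn (J : H → EReal) : Prop :=
  ∀ x y : H, ∀ t : ℝ, 0 ≤ t → t ≤ 1 →
    J (t • x + (1 - t) • y) ≤ ((t : ℝ) : EReal) * J x + (((1 - t) : ℝ) : EReal) * J y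

/-- `J` is proper: it never takes the value `⊥` and is not identically `⊤`. -/
def ProperFn (J : H → EReal) : Prop := (∀ u : H, J u ≠ ⊥) ∧ ∃ u : H, J u ≠ ⊤

/-- `u` is orthogonal to the null space `N(J) = {n : J n = 0}` of `J`. -/
def InNullPerp (J : H → EReal) (u : H) : Prop := ∀ n : H, J n = 0 → ⟪u, n⟫ = 0

/-- The objective `v ↦ ½‖v - u‖² + α J(v)` of the proximal problem for `J`. -/
def ProxObj (J : H → EReal) (α : ℝ) (u v : H) : EReal :=
  (((2 : ℝ)⁻¹ * ‖v - u‖ ^ 2 : ℝ) : EReal) + (α : EReal) * J v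

/-- `v` is a minimizer of `w ↦ ½‖w - u‖² + α J(w)`, i.e. `v = prox_α^J(u)`
(the minimizer is unique by strict convexity). -/
def IsProxPt (J : H → EReal) (α : ℝ) (u v : H) : Prop :=
  ∀ w : H, ProxObj J α u v ≤ ProxObj J α u w

/-- The dual quantity `J_*(u) = sup { ⟪u,p⟫ / J(p) : p ∈ N(J)^⊥, J(p) > 0 }`. -/
def Jdual (J : H → EReal) (u : H) : EReal :=
  ⨆ p : {p : H // InNullPerp J p ∧ 0 < J p}, ((⟪u, (p : H)⟫ : ℝ) : EReal) / J (p : H)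

/-- `p` belongs to the subdifferential `∂J(u)`. -/
def InSubdiff (J : H → EReal) (u p : H) : Prop :=
  ∀ v : H, J u + ((⟪p, v - u⟫ : ℝ) : EReal) ≤ J v

end

open Filter Topology

lemma eq_zero_of_eventually_nonneg_mul_add_sq_mul {a b : ℝ}
    (h : ∀ᶠ t in 𝓝 0, 0 ≤ t * a + t ^ 2 * b) : a = 0 := by
  have hmin : IsLocalMin (fun t : ℝ => t * a + t ^ 2 * b) 0 := by
    filter_upwards [h] with t ht
    simpa using ht
  have hderiv : HasDerivAt (fun t : ℝ => t * a + t ^ 2 * b) a 0 := by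
    simpa using (hasDerivAt_mul_const a).fun_add ((hasDerivAt_pow 2 (0 : ℝ)).mul_const b)
  exact hmin.hasDerivAt_eq_zero hderiv

lemma EReal.coe_lt_inv_coe_iff {α r : ℝ} (hr : 0 < r) :
    (α : EReal) < (r : EReal)⁻¹ ↔ α * r < 1 := by
  rw [← EReal.coe_inv, EReal.coe_lt_coe_iff, ← one_div, lt_div_iff₀ hr]

section

variable {H : Type*} [NormedAddCommGroup H] {J : H → EReal} {α : ℝ} {u v : H}

namespace IsProxPt

lemma objective_le_of_le (hpv : IsProxPt J α u v) (hα : 0 ≤ α) {s : ℝ} (hs : J v = s) {w : H}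
    {t : ℝ} (hw : J w ≤ t) : 2⁻¹ * ‖v - u‖ ^ 2 + α * s ≤ 2⁻¹ * ‖w - u‖ ^ 2 + α * t := by
  have h := (hpv w).trans
    (add_le_add_right (mul_le_mul_of_nonneg_left hw (EReal.coe_nonneg.2 hα)) _)
  rw [ProxObj, hs] at h
  exact_mod_cast h

lemma ne_top (hpv : IsProxPt J α u v) (hα : 0 < α) (hJ0 : J 0 = 0) : J v ≠ ⊤ := by
  intro htop
  have h := hpv 0
  rw [ProxObj, ProxObj, htop, hJ0, EReal.coe_mul_top_of_pos hα,
    EReal.add_top_of_ne_bot (EReal.coe_ne_bot _), mul_zero, add_zero] at h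
  exact (EReal.coe_lt_top _).not_ge h

end IsProxPt

variable [InnerProductSpace ℝ H]

lemma InNullPerp.smul {u : H} (hu : InNullPerp J u) (c : ℝ) : InNullPerp J (c • u) := by
  intro n hn
  rw [real_inner_smul_left, hu n hn, mul_zero]

namespace AbsOneHom

lemma map_smul (hhom : AbsOneHom J) (c : ℝ) (u : H) : J (c • u) = ((|c| : ℝ) : EReal) * J u := by
  rcases eq_or_ne c 0 with rfl | hc
  · simp [hhom.1]
  · exact hhom.2 c hc u

lemma map_neg (hhom : AbsOneHom J) (u : H) : J (-u) = J u := by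
  simpa using hhom.map_smul (-1) u

lemma nonneg (hhom : AbsOneHom J) (hconv : ConvexFn J) (u : H) : 0 ≤ J u := by
  have h := hconv u (-u) 2⁻¹ (by norm_num) (by norm_num)
  rwa [show (2⁻¹ : ℝ) • u + (1 - 2⁻¹ : ℝ) • -u = 0 by module, hhom.1, hhom.map_neg,
    ← EReal.right_distrib_of_nonneg (by norm_num) (by norm_num), ← EReal.coe_add,
    show (2⁻¹ + (1 - 2⁻¹) : ℝ) = 1 by norm_num, EReal.coe_one, one_mul] at h

lemma map_add_le (hhom : AbsOneHom J) (hconv : ConvexFn J) (x y : H) : J (x + y) ≤ J x + J y := by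
  have h := hconv x y 2⁻¹ (by norm_num) (by norm_num)
  calc J (x + y) = ((|(2 : ℝ)| : ℝ) : EReal) * J ((2⁻¹ : ℝ) • x + (1 - 2⁻¹ : ℝ) • y) := by
        rw [← hhom.map_smul]; congr 1; module
    _ ≤ (2 : ℝ) * (((2⁻¹ : ℝ) : EReal) * J x + ((1 - 2⁻¹ : ℝ) : EReal) * J y) := by
        rw [abs_two]; exact mul_le_mul_of_nonneg_left h (by norm_num)
    _ = J x + J y := by
        rw [EReal.left_distrib_of_nonneg_of_ne_top (by norm_num) (EReal.coe_ne_top _), ← mul_assoc,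
          ← mul_assoc, ← EReal.coe_mul, ← EReal.coe_mul]
        norm_num

lemma pos_of_inNullPerp (hhom : AbsOneHom J) (hconv : ConvexFn J) {u : H} (hu : InNullPerp J u)
    (hu0 : u ≠ 0) : 0 < J u :=
  (hhom.nonneg hconv u).lt_of_ne fun h => hu0 (inner_self_eq_zero.1 (hu u h.symm))

end AbsOneHom

namespace IsProxPt

/-- First-order optimality of `v` along a direction `d` in which `J` grows at most linearly. -/
lemma inner_sub_add_mul_eq_zero (hpv : IsProxPt J α u v) (hα : 0 ≤ α) {s : ℝ} (hs : J v = s)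
    {d : H} {a : ℝ} (hd : ∀ᶠ t in 𝓝 (0 : ℝ), J (v + t • d) ≤ ((s + t * a : ℝ) : EReal)) :
    ⟪v - u, d⟫ + α * a = 0 := by
  refine eq_zero_of_eventually_nonneg_mul_add_sq_mul (b := 2⁻¹ * ‖d‖ ^ 2) ?_
  filter_upwards [hd] with t ht
  have h := hpv.objective_le_of_le hα hs ht
  have hexp : ‖v + t • d - u‖ ^ 2 = ‖v - u‖ ^ 2 + 2 * t * ⟪v - u, d⟫ + t ^ 2 * ‖d‖ ^ 2 := by
    rw [add_sub_right_comm, norm_add_sq_real, real_inner_smul_right, norm_smul,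
      Real.norm_eq_abs, mul_pow, sq_abs]
    ring
  rw [hexp] at h
  linarith

lemma inNullPerp (hpv : IsProxPt J α u v) (hα : 0 ≤ α) (hhom : AbsOneHom J) (hconv : ConvexFn J)
    {s : ℝ} (hs : J v = s) (hu : InNullPerp J u) : InNullPerp J v := by
  intro n hn
  have hd : ∀ t : ℝ, J (v + t • n) ≤ ((s + t * 0 : ℝ) : EReal) := fun t =>
    calc J (v + t • n) ≤ J v + J (t • n) := hhom.map_add_le hconv _ _
      _ = ((s + t * 0 : ℝ) : EReal) := by rw [hhom.map_smul, hn, mul_zero, add_zero, hs]; simp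
  have h := hpv.inner_sub_add_mul_eq_zero hα hs (Eventually.of_forall hd)
  rw [inner_sub_left, hu n hn] at h
  linarith

/-- First-order optimality of `v` along the ray through `v`, on which `J` is linear. -/
lemma inner_sub_self_add_mul_eq_zero (hpv : IsProxPt J α u v) (hα : 0 ≤ α) (hhom : AbsOneHom J)
    {s : ℝ} (hs : J v = s) : ⟪v - u, v⟫ + α * s = 0 := by
  refine hpv.inner_sub_add_mul_eq_zero hα hs (d := v) ?_
  filter_upwards [Ioi_mem_nhds (show (-1 : ℝ) < 0 by norm_num)] with t ht
  have h1t : 0 < 1 + t := by linarith [Set.mem_Ioi.1 ht]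
  rw [show v + t • v = (1 + t) • v by module, hhom.map_smul, hs, abs_of_pos h1t, ← EReal.coe_mul]
  exact EReal.coe_le_coe_iff.2 (le_of_eq (by ring))

lemma ne_zero (hpv : IsProxPt J α u v) (hα : 0 ≤ α) (hhom : AbsOneHom J) (hnorm : ‖u‖ = 1)
    {r : ℝ} (hr : J u = r) (hαr : α * r < 1) : v ≠ 0 := by
  -- `t • u` has objective `½ - ½ (1 - α r)²`, below the value `½` at `0`.
  rintro rfl
  set t : ℝ := 1 - α * r
  have ht : 0 < t := by linarith
  have hJtu : J (t • u) ≤ ((t * r : ℝ) : EReal) := by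
    rw [hhom.map_smul, hr, abs_of_pos ht, EReal.coe_mul]
  have h := hpv.objective_le_of_le hα (s := 0) hhom.1 hJtu
  rw [show t • u - u = (-(α * r)) • u by module, norm_smul, zero_sub, norm_neg, hnorm,
    Real.norm_eq_abs, mul_one, sq_abs, one_pow] at h
  nlinarith

lemma exists_eq_coe (hpv : IsProxPt J α u v) (hα : 0 < α) (hhom : AbsOneHom J)
    (hconv : ConvexFn J) : ∃ s : ℝ, J v = s :=
  ⟨(J v).toReal, EReal.coe_toReal (hpv.ne_top hα hhom.1)
    ((hhom.nonneg hconv v).trans_lt' EReal.bot_lt_zero).ne' |>.symm⟩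

lemma mul_lt_norm (hpv : IsProxPt J α u v) (hα : 0 ≤ α) (hhom : AbsOneHom J) (hnorm : ‖u‖ = 1)
    (hv0 : v ≠ 0) {s : ℝ} (hs : J v = s) : α * s < ‖v‖ := by
  have h := hpv.inner_sub_self_add_mul_eq_zero hα hhom hs
  rw [inner_sub_left, real_inner_self_eq_norm_sq] at h
  have hcs : ⟪u, v⟫ ≤ ‖v‖ := by simpa [hnorm] using real_inner_le_norm u v
  have hv := norm_pos_iff.2 hv0
  nlinarith

end IsProxPt

lemma inv_le_Jdual (hhom : AbsOneHom J) (hconv : ConvexFn J) {u : H} (hu : InNullPerp J u)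
    (hnorm : ‖u‖ = 1) : (J u)⁻¹ ≤ Jdual J u := by
  have hpos := hhom.pos_of_inNullPerp hconv hu (ne_zero_of_norm_ne_zero (by simp [hnorm]))
  refine le_trans (le_of_eq ?_) (le_iSup (fun p : {p : H // InNullPerp J p ∧ 0 < J p} =>
    ((⟪u, (p : H)⟫ : ℝ) : EReal) / J (p : H)) ⟨u, hu, hpos⟩)
  rw [real_inner_self_eq_norm_sq, hnorm, one_pow, EReal.coe_one, one_div]

/-- The invariant of the proximal power method with parameter `α`. -/
def IsAdmissibleIterate (J : H → EReal) (α : ℝ) (u : H) : Prop :=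
  InNullPerp J u ∧ ‖u‖ = 1 ∧ (α : EReal) < (J u)⁻¹

namespace IsAdmissibleIterate

lemma exists_eq_coe (hu : IsAdmissibleIterate J α u) (hα : 0 < α) (hhom : AbsOneHom J)
    (hconv : ConvexFn J) : ∃ r : ℝ, J u = r ∧ α * r < 1 := by
  have hpos := hhom.pos_of_inNullPerp hconv hu.1 (ne_zero_of_norm_ne_zero (by simp [hu.2.1]))
  have htop : J u ≠ ⊤ := by
    intro h
    have h' := hu.2.2
    rw [h, EReal.inv_top] at h'
    exact hα.not_gt (by exact_mod_cast h')
  obtain ⟨r, hr⟩ : ∃ r : ℝ, J u = r := ⟨(J u).toReal, (EReal.coe_toReal htop hpos.ne_bot).symm⟩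
  have hr0 : 0 < r := by exact_mod_cast hr ▸ hpos
  exact ⟨r, hr, (EReal.coe_lt_inv_coe_iff hr0).1 (hr ▸ hu.2.2)⟩

lemma prox_ne_zero (hu : IsAdmissibleIterate J α u) (hα : 0 < α) (hhom : AbsOneHom J)
    (hconv : ConvexFn J) (hpv : IsProxPt J α u v) : v ≠ 0 := by
  obtain ⟨r, hr, hαr⟩ := hu.exists_eq_coe hα hhom hconv
  exact hpv.ne_zero hα.le hhom hu.2.1 hr hαr

lemma normalize_prox (hu : IsAdmissibleIterate J α u) (hα : 0 < α) (hhom : AbsOneHom J)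
    (hconv : ConvexFn J) (hpv : IsProxPt J α u v) : IsAdmissibleIterate J α (‖v‖⁻¹ • v) := by
  have hv0 := hu.prox_ne_zero hα hhom hconv hpv
  have hnv := norm_pos_iff.2 hv0
  obtain ⟨s, hs⟩ := hpv.exists_eq_coe hα hhom hconv
  have hvperp := hpv.inNullPerp hα.le hhom hconv hs hu.1
  have hs0 : 0 < s := by exact_mod_cast hs ▸ hhom.pos_of_inNullPerp hconv hvperp hv0
  refine ⟨hvperp.smul _, norm_smul_inv_norm hv0, ?_⟩
  rw [hhom.map_smul, hs, abs_of_pos (inv_pos.2 hnv), ← EReal.coe_mul,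
    EReal.coe_lt_inv_coe_iff (by positivity), mul_left_comm, ← div_eq_inv_mul, div_lt_one hnv]
  exact hpv.mul_lt_norm hα.le hhom hu.2.1 hv0 hs

end IsAdmissibleIterate

end

section

variable {H : Type*} [NormedAddCommGroup H] [InnerProductSpace ℝ H] [CompleteSpace H]

theorem well_definedness_constant_parameter_general
    (J : H → EReal) (hconv : ConvexFn J) (hhom : AbsOneHom J)
    (f : H) (hf : InNullPerp J f) (hfnorm : ‖f‖ = 1)
    (α : ℝ) (hαpos : 0 < α) (hαlt : (α : EReal) < (J f)⁻¹)
    (useq vseq : ℕ → H)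
    (hinit : useq 0 = f)
    (hv : ∀ k, IsProxPt J α (useq k) (vseq k))
    (hstep : ∀ k, useq (k + 1) = ‖vseq k‖⁻¹ • vseq k) :
    ∀ k, (α : EReal) < (J (useq k))⁻¹ ∧ (J (useq k))⁻¹ ≤ Jdual J (useq k) ∧
      vseq k ≠ 0 := by
  have hadm : ∀ k, IsAdmissibleIterate J α (useq k) := by
    intro k
    induction k with
    | zero => exact hinit ▸ ⟨hf, hfnorm, hαlt⟩
    | succ k ih => rw [hstep k]; exact ih.normalize_prox hαpos hhom hconv (hv k)
  intro k
  exact ⟨(hadm k).2.2, inv_le_Jdual hhom hconv (hadm k).1 (hadm k).2.1,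
    (hadm k).prox_ne_zero hαpos hhom hconv (hv k)⟩

/-- **Well-definedness of the proximal power method with constant parameter.**
Let `J` be proper, convex, lsc, absolutely one-homogeneous, and let `(u^k)` be
the proximal power method starting from `u⁰ = f ∈ N(J)^⊥` with `‖f‖ = 1`,
`0 < J f < ∞`, with constant parameter `0 < α < 1/J(u⁰)`. Then for every `k`
one has `α < 1/J(u^k) ≤ J_*(u^k)`, hence `v^k = prox_α^J(u^k) ≠ 0` and the
method is well-defined. -/
theorem well_definedness_constant_parameter
    (J : H → EReal) (hproper : ProperFn J) (hconv : ConvexFn J)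
    (hlsc : LowerSemicontinuous J) (hhom : AbsOneHom J)
    (f : H) (hf : InNullPerp J f) (hfnorm : ‖f‖ = 1)
    (hJfpos : 0 < J f) (hJffin : J f ≠ ⊤)
    (α : ℝ) (hαpos : 0 < α) (hαlt : (α : EReal) < (J f)⁻¹)
    (useq vseq : ℕ → H)
    (hinit : useq 0 = f)
    (hv : ∀ k, IsProxPt J α (useq k) (vseq k))
    (hstep : ∀ k, useq (k + 1) = ‖vseq k‖⁻¹ • vseq k) :
    ∀ k, (α : EReal) < (J (useq k))⁻¹ ∧ (J (useq k))⁻¹ ≤ Jdual J (useq k) ∧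
      vseq k ≠ 0 :=
  well_definedness_constant_parameter_general J hconv hhom f hf hfnorm α hαpos hαlt useq vseq hinit
    hv hstep

end
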